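/- arXiv:1301.7455 — 12 statements merged into one kernel-verified Lean document; each statement's English description precedes it below -/
import Mathlib

section
/- For every finite set V, every weight function w : V → V → ℝ with w i j ≥ 0 and w i i = 0, every internal-opinion vector s : V → ℝ, and every subset T ⊆ V, there exists a unique vector z : V → ℝ such that z i = 1 for every i ∈ T and z i · (1 + W i) = s i + Σ_{j ∈ V} w i j · z j for every i ∉ T, where W i = Σ_{j ∈ V} w i j. -/
/-!
Off `T` the equilibrium equations say that `z i` is a weighted average of `s i` (weight `1`) and
the `z j` (weights `w i j`). Hence the difference `d` of two equilibria vanishes on `T` and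
satisfies `d i * (1 + W i) = ∑ j, w i j * d j` off `T`; at a point where `|d|` is maximal this
forces `|d i| * (1 + W i) ≤ |d i| * W i`, so `d = 0`. The equations are therefore an injective,
hence bijective, linear system on the finite-dimensional space `V → ℝ`.
-/

open Finset

namespace CampaignEquilibrium

variable {V : Type*} [Fintype V]

theorem eq_zero_of_balanced_off (w : V → V → ℝ) (hw : ∀ i j, 0 ≤ w i j) (T : Finset V)
    (d : V → ℝ) (hT : ∀ i ∈ T, d i = 0)
    (hbal : ∀ i ∉ T, d i * (1 + ∑ j, w i j) = ∑ j, w i j * d j) :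
    d = 0 := by
  by_contra hne
  obtain ⟨k, hk⟩ := Function.ne_iff.mp hne
  obtain ⟨i, -, hmax⟩ := exists_max_image univ (fun i => |d i|) ⟨k, mem_univ k⟩
  have hdi : |d i| = 0 := by
    by_cases hi : i ∈ T
    · simp [hT i hi]
    have hle : |d i| * (1 + ∑ j, w i j) ≤ |d i| * ∑ j, w i j :=
      calc |d i| * (1 + ∑ j, w i j)
          = |∑ j, w i j * d j| := by
            have hW : 0 ≤ 1 + ∑ j, w i j := by linarith [Fintype.sum_nonneg (f := w i) (hw i)]
            rw [← hbal i hi, abs_mul, abs_of_nonneg hW]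
        _ ≤ ∑ j, w i j * |d j| := by
            refine (abs_sum_le_sum_abs _ _).trans (sum_le_sum fun j _ => ?_)
            rw [abs_mul, abs_of_nonneg (hw i j)]
        _ ≤ ∑ j, w i j * |d i| :=
            sum_le_sum fun j _ => mul_le_mul_of_nonneg_left (hmax j (mem_univ j)) (hw i j)
        _ = |d i| * ∑ j, w i j := by rw [← sum_mul, mul_comm]
    linarith [abs_nonneg (d i)]
  exact hk (abs_eq_zero.mp (le_antisymm (hdi ▸ hmax k (mem_univ k)) (abs_nonneg _)))

variable [DecidableEq V]

def equilibriumOperator (w : V → V → ℝ) (T : Finset V) : (V → ℝ) →ₗ[ℝ] (V → ℝ) where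
  toFun z i := if i ∈ T then z i else z i * (1 + ∑ j, w i j) - ∑ j, w i j * z j
  map_add' x y := by
    ext i
    simp only [Pi.add_apply]
    split_ifs
    · rfl
    · simp only [mul_add, sum_add_distrib]
      ring
  map_smul' c x := by
    ext i
    simp only [Pi.smul_apply, smul_eq_mul, RingHom.id_apply]
    split_ifs
    · rfl
    · simp only [mul_sub, mul_sum, mul_left_comm c, mul_assoc]

theorem equilibriumOperator_injective (w : V → V → ℝ) (hw : ∀ i j, 0 ≤ w i j) (T : Finset V) :
    Function.Injective (equilibriumOperator w T) := by
  refine (injective_iff_map_eq_zero _).mpr fun d hd => ?_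
  refine eq_zero_of_balanced_off w hw T d (fun i hi => ?_) fun i hi => ?_
  · simpa [equilibriumOperator, hi] using congrFun hd i
  · simpa [equilibriumOperator, hi, sub_eq_zero] using congrFun hd i

theorem equilibriumOperator_bijective (w : V → V → ℝ) (hw : ∀ i j, 0 ≤ w i j) (T : Finset V) :
    Function.Bijective (equilibriumOperator w T) :=
  let hinj := equilibriumOperator_injective w hw T
  ⟨hinj, LinearMap.injective_iff_surjective.mp hinj⟩

theorem equilibriumOperator_eq_iff (w : V → V → ℝ) (s : V → ℝ) (T : Finset V) (z : V → ℝ) :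
    equilibriumOperator w T z = (fun i => if i ∈ T then 1 else s i) ↔
      (∀ i ∈ T, z i = 1) ∧ (∀ i ∉ T, z i * (1 + ∑ j, w i j) = s i + ∑ j, w i j * z j) := by
  simp only [funext_iff, equilibriumOperator, LinearMap.coe_mk, AddHom.coe_mk]
  constructor
  · intro h
    refine ⟨fun i hi => by simpa [hi] using h i, fun i hi => ?_⟩
    have := h i
    simp only [hi, if_false] at this
    linarith
  · rintro ⟨hT, hoff⟩ i
    by_cases hi : i ∈ T
    · simp [hi, hT i hi]
    · simp only [hi, if_false]
      linarith [hoff i hi]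

end CampaignEquilibrium

open CampaignEquilibrium in
theorem campaign_equilibrium_exists_unique_general
    {V : Type*} [Fintype V] (w : V → V → ℝ)
    (hw : ∀ i j, 0 ≤ w i j)
    (s : V → ℝ) (T : Finset V) :
    ∃! z : V → ℝ,
      (∀ i ∈ T, z i = 1) ∧
      (∀ i ∉ T, z i * (1 + ∑ j, w i j) = s i + ∑ j, w i j * z j) := by
  classical
  simpa only [equilibriumOperator_eq_iff] using
    (equilibriumOperator_bijective w hw T).existsUnique fun i => if i ∈ T then 1 else s i

/-- existence and uniqueness of the T-equilibrium. -/
theorem campaign_equilibrium_exists_unique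
    {V : Type*} [Fintype V] (w : V → V → ℝ)
    (hw : ∀ i j, 0 ≤ w i j) (hdiag : ∀ i, w i i = 0)
    (s : V → ℝ) (T : Finset V) :
    ∃! z : V → ℝ,
      (∀ i ∈ T, z i = 1) ∧
      (∀ i ∉ T, z i * (1 + ∑ j, w i j) = s i + ∑ j, w i j * z j) :=
  campaign_equilibrium_exists_unique_general w hw s T
end

section
/- Let V be a finite set, w a weight function on V, and s : V → ℝ. If z : V → ℝ satisfies z i · (1 + W i) = s i + Σ_{j ∈ V} w i j · z j for every i ∈ V, then z is a Nash equilibrium of the opinion-formation game: for every node i ∈ V and every y ∈ ℝ, c i (z) ≤ c i (z') where z' agrees with z except that z' i = y. -/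
/-!
Only node `i`'s own opinion varies, and its cost is the convex quadratic
`y ↦ (s i - y)² + ∑ j, w i j (y - z j)²`, whose leading coefficient `1 + W i` is positive.
The equilibrium equation at `i` says exactly that `z i` is its stationary point, so the cost
exceeds the equilibrium cost by `(1 + W i) (y - z i)²`.
-/

noncomputable def personalCost {V : Type*} [Fintype V]
    (w : V → V → ℝ) (s : V → ℝ) (i : V) (z : V → ℝ) : ℝ :=
  (s i - z i) ^ 2 + ∑ j, w i j * (z i - z j) ^ 2

theorem sq_sub_add_sum_mul_sq_sub_le {ι : Type*} [Fintype ι] {a p : ι → ℝ} {s x : ℝ}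
    (ha : ∀ j, 0 ≤ a j) (hx : x * (1 + ∑ j, a j) = s + ∑ j, a j * p j) (y : ℝ) :
    (s - x) ^ 2 + ∑ j, a j * (x - p j) ^ 2 ≤ (s - y) ^ 2 + ∑ j, a j * (y - p j) ^ 2 := by
  have hsum : ∑ j, a j * (y - p j) ^ 2 = ∑ j, a j * (x - p j) ^ 2
      + 2 * (y - x) * (x * ∑ j, a j - ∑ j, a j * p j) + (y - x) ^ 2 * ∑ j, a j := by
    simp only [Finset.mul_sum, ← Finset.sum_sub_distrib, ← Finset.sum_add_distrib]
    exact Finset.sum_congr rfl fun j _ => by ring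
  have hexcess : (s - y) ^ 2 + ∑ j, a j * (y - p j) ^ 2
      = (s - x) ^ 2 + ∑ j, a j * (x - p j) ^ 2 + (1 + ∑ j, a j) * (y - x) ^ 2 := by
    rw [hsum]
    linear_combination 2 * (y - x) * hx
  have hpos : 0 ≤ 1 + ∑ j, a j := by
    linarith [Finset.sum_nonneg fun j (_ : j ∈ Finset.univ) => ha j]
  rw [hexcess]
  exact le_add_of_nonneg_right (mul_nonneg hpos (sq_nonneg (y - x)))

theorem personalCost_update_self {V : Type*} [Fintype V] [DecidableEq V]
    {w : V → V → ℝ} {i : V} (hii : w i i = 0) (s z : V → ℝ) (y : ℝ) :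
    personalCost w s i (Function.update z i y) = (s i - y) ^ 2 + ∑ j, w i j * (y - z j) ^ 2 := by
  simp only [personalCost, Function.update_self]
  congr 1
  refine Finset.sum_congr rfl fun j _ => ?_
  rcases eq_or_ne j i with rfl | hji
  · simp [hii]
  · rw [Function.update_of_ne hji]

/-- the unconstrained equilibrium is a Nash equilibrium of the
opinion-formation game. -/
theorem campaign_equilibrium_is_nash
    {V : Type*} [Fintype V] [DecidableEq V] (w : V → V → ℝ)
    (hw : ∀ i j, 0 ≤ w i j) (hdiag : ∀ i, w i i = 0)
    (s : V → ℝ) (z : V → ℝ)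
    (heq : ∀ i, z i * (1 + ∑ j, w i j) = s i + ∑ j, w i j * z j) :
    ∀ i : V, ∀ y : ℝ,
      personalCost w s i z ≤ personalCost w s i (Function.update z i y) := by
  intro i y
  rw [personalCost_update_self (hdiag i)]
  exact sq_sub_add_sum_mul_sq_sub_le (hw i) (heq i) y
end

section
/- Let V be a finite set, w a weight function on V, s : V → ℝ with 0 ≤ s i ≤ 1 for all i, and let T ⊆ T' ⊆ V. If z is a T-equilibrium and z' is a T'-equilibrium for (w, s), then z i ≤ z' i for every node i ∈ V. -/
/-!
Maximum principle: if `d` satisfies `d i * (1 + ∑ j, w i j) ≤ ∑ j, w i j * d j` wherever it is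
positive, then at a maximiser the right side is at most `(∑ j, w i j) * d i`, forcing `d ≤ 0`.
Applied to `z - 1` it gives `z ≤ 1` (this is where `s ≤ 1` enters), and then to `z - z'`, which
satisfies the inequality with equality off `T'` and is `z - 1 ≤ 0` on `T'`.
-/

open Finset

section MaximumPrinciple

variable {V : Type*} [Fintype V] {w : V → V → ℝ}

lemma nonpos_of_forall_nonpos_or_le_weighted_sum (hw : ∀ i j, 0 ≤ w i j) {d : V → ℝ}
    (hd : ∀ i, d i ≤ 0 ∨ d i * (1 + ∑ j, w i j) ≤ ∑ j, w i j * d j) (i : V) : d i ≤ 0 := by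
  have : Nonempty V := ⟨i⟩
  obtain ⟨m, hm⟩ := Finite.exists_max d
  refine (hm i).trans ?_
  rcases hd m with hneg | hle
  · exact hneg
  · have hsum : ∑ j, w m j * d j ≤ (∑ j, w m j) * d m := by
      rw [sum_mul]
      exact sum_le_sum fun j _ => mul_le_mul_of_nonneg_left (hm j) (hw m j)
    linarith

lemma weighted_sum_sub (w : V → V → ℝ) (x y : V → ℝ) (i : V) :
    ∑ j, w i j * (x j - y j) = ∑ j, w i j * x j - ∑ j, w i j * y j := by
  simp only [mul_sub, sum_sub_distrib]

variable {s : V → ℝ} {T : Finset V} {z : V → ℝ}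

lemma equilibrium_le_one (hw : ∀ i j, 0 ≤ w i j) (hs : ∀ i, s i ≤ 1)
    (hz1 : ∀ i ∈ T, z i = 1)
    (hz2 : ∀ i ∉ T, z i * (1 + ∑ j, w i j) = s i + ∑ j, w i j * z j) (i : V) : z i ≤ 1 := by
  suffices ∀ i, z i - 1 ≤ 0 from sub_nonpos.mp (this i)
  refine nonpos_of_forall_nonpos_or_le_weighted_sum hw fun i => ?_
  by_cases hi : i ∈ T
  · exact Or.inl (by rw [hz1 i hi, sub_self])
  · right
    have hW : ∑ j, w i j * (z j - 1) = ∑ j, w i j * z j - ∑ j, w i j := by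
      simpa using weighted_sum_sub w z 1 i
    rw [hW]
    linarith [hz2 i hi, hs i]

end MaximumPrinciple

theorem campaign_equilibrium_monotone_pointwise_general
    {V : Type*} [Fintype V] (w : V → V → ℝ)
    (hw : ∀ i j, 0 ≤ w i j)
    (s : V → ℝ) (hs : ∀ i, 0 ≤ s i ∧ s i ≤ 1)
    (T T' : Finset V) (hTT' : T ⊆ T')
    (z z' : V → ℝ)
    (hz1 : ∀ i ∈ T, z i = 1)
    (hz2 : ∀ i ∉ T, z i * (1 + ∑ j, w i j) = s i + ∑ j, w i j * z j)
    (hz'1 : ∀ i ∈ T', z' i = 1)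
    (hz'2 : ∀ i ∉ T', z' i * (1 + ∑ j, w i j) = s i + ∑ j, w i j * z' j) :
    ∀ i : V, z i ≤ z' i := by
  have hz_le_one := equilibrium_le_one hw (fun i => (hs i).2) hz1 hz2
  suffices ∀ i, z i - z' i ≤ 0 from fun i => sub_nonpos.mp (this i)
  refine nonpos_of_forall_nonpos_or_le_weighted_sum hw fun i => ?_
  by_cases hi : i ∈ T'
  · exact Or.inl (by linarith [hz'1 i hi, hz_le_one i])
  · right
    rw [weighted_sum_sub]
    linarith [hz2 i fun h => hi (hTT' h), hz'2 i hi]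

/-- pointwise monotonicity of the equilibrium in the target set. -/
theorem campaign_equilibrium_monotone_pointwise
    {V : Type*} [Fintype V] (w : V → V → ℝ)
    (hw : ∀ i j, 0 ≤ w i j) (hdiag : ∀ i, w i i = 0)
    (s : V → ℝ) (hs : ∀ i, 0 ≤ s i ∧ s i ≤ 1)
    (T T' : Finset V) (hTT' : T ⊆ T')
    (z z' : V → ℝ)
    (hz1 : ∀ i ∈ T, z i = 1)
    (hz2 : ∀ i ∉ T, z i * (1 + ∑ j, w i j) = s i + ∑ j, w i j * z j)
    (hz'1 : ∀ i ∈ T', z' i = 1)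
    (hz'2 : ∀ i ∉ T', z' i * (1 + ∑ j, w i j) = s i + ∑ j, w i j * z' j) :
    ∀ i : V, z i ≤ z' i :=
  campaign_equilibrium_monotone_pointwise_general w hw s hs T T' hTT' z z' hz1 hz2 hz'1 hz'2
end

section
/- (Submodularity of the campaign objective.) Let V be a finite set, w a weight function on V, s : V → ℝ with 0 ≤ s i ≤ 1 for all i. Let T ⊆ T' ⊆ V and let j ∈ V with j ∉ T'. Let z_T, z_{T∪{j}}, z_{T'}, z_{T'∪{j}} denote the equilibria for (w, s) with respect to the target sets T, T ∪ {j}, T', T' ∪ {j}, respectively. Then g(z_{T'∪{j}}) − g(z_{T'}) ≤ g(z_{T∪{j}}) − g(z_T), where g(z) = Σ_{i ∈ V} z i. -/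
/-- `z` is a T-equilibrium for `(w, s)`. -/
def IsTEquilibrium {V : Type*} [Fintype V]
    (w : V → V → ℝ) (s : V → ℝ) (T : Finset V) (z : V → ℝ) : Prop :=
  (∀ i ∈ T, z i = 1) ∧
  (∀ i ∉ T, z i * (1 + ∑ j, w i j) = s i + ∑ j, w i j * z j)

/-!
Each equilibrium equation says that `z i` is a weighted average of `s i` (weight 1) and the
neighbouring values `z k` (weights `w i k`), so the equations obey a minimum principle: a function
that is nonnegative on the targets and superharmonic elsewhere is nonnegative everywhere. Applied to
`1 - z`, to `z_S - z_T` for `T ⊆ S`, and finally to `(z_{T∪{j}} - z_T) - (z_{T'∪{j}} - z_{T'})`, it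
gives `z ≤ 1`, monotonicity in the target set, and the pointwise decrease of marginal gains, which
summed over `V` is submodularity of `g`.
-/

open Finset

section

variable {V : Type*} [Fintype V] {w : V → V → ℝ}

theorem nonneg_of_superharmonic_off (hw : ∀ i j, 0 ≤ w i j) {B : Finset V} {e : V → ℝ}
    (hB : ∀ i ∈ B, 0 ≤ e i)
    (hsuper : ∀ i ∉ B, ∑ k, w i k * e k ≤ e i * (1 + ∑ k, w i k)) (i : V) :
    0 ≤ e i := by
  obtain ⟨m, -, hm⟩ := exists_min_image univ e ⟨i, mem_univ i⟩
  by_contra! hi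
  have hneg : e m < 0 := (hm i (mem_univ i)).trans_lt hi
  have hmB : m ∉ B := fun h => (hB m h).not_gt hneg
  have hbelow : (∑ k, w m k) * e m ≤ ∑ k, w m k * e k := by
    rw [sum_mul]
    exact sum_le_sum fun k _ => mul_le_mul_of_nonneg_left (hm k (mem_univ k)) (hw m k)
  linarith [hsuper m hmB]

namespace IsTEquilibrium

variable {s : V → ℝ}

theorem sub_mul_eq_sum {T₁ T₂ : Finset V} {z₁ z₂ : V → ℝ}
    (h₁ : IsTEquilibrium w s T₁ z₁) (h₂ : IsTEquilibrium w s T₂ z₂) {i : V}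
    (hi₁ : i ∉ T₁) (hi₂ : i ∉ T₂) :
    (z₁ i - z₂ i) * (1 + ∑ k, w i k) = ∑ k, w i k * (z₁ k - z₂ k) := by
  simp only [mul_sub, sum_sub_distrib]
  linear_combination h₁.2 i hi₁ - h₂.2 i hi₂

theorem le_one (hw : ∀ i j, 0 ≤ w i j) (hs : ∀ i, s i ≤ 1) {T : Finset V} {z : V → ℝ}
    (hz : IsTEquilibrium w s T z) (i : V) : z i ≤ 1 := by
  have h := nonneg_of_superharmonic_off hw (e := fun k => 1 - z k)
    (fun k hk => by simp [hz.1 k hk])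
    (fun k hk => by
      simp only [mul_sub, mul_one, sum_sub_distrib]
      linarith [hz.2 k hk, hs k]) i
  linarith

theorem mono (hw : ∀ i j, 0 ≤ w i j) (hs : ∀ i, s i ≤ 1) {T S : Finset V} (hTS : T ⊆ S)
    {zT zS : V → ℝ} (hzT : IsTEquilibrium w s T zT) (hzS : IsTEquilibrium w s S zS) (i : V) :
    zT i ≤ zS i := by
  have h := nonneg_of_superharmonic_off hw (e := fun k => zS k - zT k)
    (fun k hk => by simp only [hzS.1 k hk, sub_nonneg, hzT.le_one hw hs k])
    (fun k hk => (hzS.sub_mul_eq_sum hzT hk fun h => hk (hTS h)).ge) i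
  linarith

theorem marginal_gain_antitone [DecidableEq V] (hw : ∀ i j, 0 ≤ w i j) (hs : ∀ i, s i ≤ 1)
    {T T' : Finset V} (hTT' : T ⊆ T') {j : V} (hj : j ∉ T') {zT zTj zT' zT'j : V → ℝ}
    (hzT : IsTEquilibrium w s T zT) (hzTj : IsTEquilibrium w s (insert j T) zTj)
    (hzT' : IsTEquilibrium w s T' zT') (hzT'j : IsTEquilibrium w s (insert j T') zT'j)
    (i : V) : zT'j i - zT' i ≤ zTj i - zT i := by
  have h := nonneg_of_superharmonic_off hw (B := insert j T')
    (e := fun k => (zTj k - zT k) - (zT'j k - zT' k))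
    (fun k hk => by
      rcases mem_insert.mp hk with rfl | hkT'
      · have := hzT.mono hw hs hTT' hzT' k
        simp only [hzTj.1 k (mem_insert_self k T), hzT'j.1 k hk]
        linarith
      · have := hzT.mono hw hs (subset_insert j T) hzTj k
        simp only [hzT'.1 k hkT', hzT'j.1 k hk]
        linarith)
    (fun k hk => by
      have hkT' : k ∉ T' := fun h => hk (mem_insert_of_mem h)
      have hkT : k ∉ T := fun h => hkT' (hTT' h)
      have hkTj : k ∉ insert j T := by
        simp only [mem_insert, not_or] at hk ⊢
        exact ⟨hk.1, hkT⟩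
      have hsmall := hzTj.sub_mul_eq_sum hzT hkTj hkT
      have hlarge := hzT'j.sub_mul_eq_sum hzT' hk hkT'
      simp only [mul_sub, sum_sub_distrib] at hsmall hlarge ⊢
      linarith) i
  linarith

end IsTEquilibrium

end

theorem campaign_objective_submodular_general
    {V : Type*} [Fintype V] [DecidableEq V] (w : V → V → ℝ)
    (hw : ∀ i j, 0 ≤ w i j)
    (s : V → ℝ) (hs : ∀ i, 0 ≤ s i ∧ s i ≤ 1)
    (T T' : Finset V) (hTT' : T ⊆ T') (j : V) (hj : j ∉ T')
    (zT zTj zT' zT'j : V → ℝ)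
    (hzT : IsTEquilibrium w s T zT)
    (hzTj : IsTEquilibrium w s (insert j T) zTj)
    (hzT' : IsTEquilibrium w s T' zT')
    (hzT'j : IsTEquilibrium w s (insert j T') zT'j) :
    (∑ i, zT'j i) - (∑ i, zT' i) ≤ (∑ i, zTj i) - (∑ i, zT i) := by
  rw [← sum_sub_distrib, ← sum_sub_distrib]
  exact sum_le_sum fun i _ =>
    hzT.marginal_gain_antitone hw (fun i => (hs i).2) hTT' hj hzTj hzT' hzT'j i

/-- submodularity of the campaign objective g(z) = Σ_i z i. -/
theorem campaign_objective_submodular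
    {V : Type*} [Fintype V] [DecidableEq V] (w : V → V → ℝ)
    (hw : ∀ i j, 0 ≤ w i j) (hdiag : ∀ i, w i i = 0)
    (s : V → ℝ) (hs : ∀ i, 0 ≤ s i ∧ s i ≤ 1)
    (T T' : Finset V) (hTT' : T ⊆ T') (j : V) (hj : j ∉ T')
    (zT zTj zT' zT'j : V → ℝ)
    (hzT : IsTEquilibrium w s T zT)
    (hzTj : IsTEquilibrium w s (insert j T) zTj)
    (hzT' : IsTEquilibrium w s T' zT')
    (hzT'j : IsTEquilibrium w s (insert j T') zT'j) :
    (∑ i, zT'j i) - (∑ i, zT' i) ≤ (∑ i, zTj i) - (∑ i, zT i) :=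
  campaign_objective_submodular_general w hw s hs T T' hTT' j hj zT zTj zT' zT'j hzT hzTj hzT' hzT'j
end

section
/- (Marginal change identity.) Let V be a finite set, w a weight function on V, s : V → ℝ, T ⊆ V and j ∈ V with j ∉ T. Let z be the T-equilibrium and z' the (T ∪ {j})-equilibrium for (w, s), and let h : V → ℝ be the absorption vector for (T, j), i.e., the unique vector with h j = 1, h t = 0 for every t ∈ T, and h i · (1 + W i) = Σ_{l ∈ V} w i l · h l for every i ∉ T ∪ {j}. Then for every node i ∈ V, z' i − z i = h i · (1 − z j). -/
/-- `h` is the absorption vector for `(T, j)`: the probability that the absorbing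
walk started at `i` is absorbed at `j`. -/
def IsAbsorptionVector {V : Type*} [Fintype V]
    (w : V → V → ℝ) (T : Finset V) (j : V) (h : V → ℝ) : Prop :=
  h j = 1 ∧ (∀ t ∈ T, h t = 0) ∧
  (∀ i, i ∉ T → i ≠ j → h i * (1 + ∑ l, w i l) = ∑ l, w i l * h l)

open Finset

/-- `d` is harmonic off `S` for the walk that, besides following the weights `w`, moves at unit
rate to a sink where `d` is `0`. -/
def IsHarmonicOff {V : Type*} [Fintype V] (w : V → V → ℝ) (S : Finset V) (d : V → ℝ) : Prop :=
  ∀ i ∉ S, d i * (1 + ∑ l, w i l) = ∑ l, w i l * d l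

section MaximumPrinciple

variable {V : Type*} [Fintype V] {w : V → V → ℝ}

theorem eq_zero_of_abs_isMax_of_harmonic_at {d : V → ℝ} {i : V} (hw : ∀ l, 0 ≤ w i l)
    (hmax : ∀ l, |d l| ≤ |d i|) (hi : d i * (1 + ∑ l, w i l) = ∑ l, w i l * d l) :
    d i = 0 := by
  have hW : 0 ≤ ∑ l, w i l := sum_nonneg fun l _ => hw l
  have hle : |d i| * (1 + ∑ l, w i l) ≤ (∑ l, w i l) * |d i| :=
    calc |d i| * (1 + ∑ l, w i l) = |∑ l, w i l * d l| := by
          rw [← hi, abs_mul, abs_of_nonneg (by linarith : (0 : ℝ) ≤ 1 + ∑ l, w i l)]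
      _ ≤ ∑ l, |w i l * d l| := abs_sum_le_sum_abs _ _
      _ ≤ ∑ l, w i l * |d i| := sum_le_sum fun l _ => by
          rw [abs_mul, abs_of_nonneg (hw l)]
          exact mul_le_mul_of_nonneg_left (hmax l) (hw l)
      _ = (∑ l, w i l) * |d i| := by rw [← sum_mul]
  exact abs_nonpos_iff.mp (by linarith)

theorem IsHarmonicOff.eq_zero {S : Finset V} {d : V → ℝ} (hw : ∀ i j, 0 ≤ w i j)
    (hd : IsHarmonicOff w S d) (hS : ∀ i ∈ S, d i = 0) (i : V) : d i = 0 := by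
  have : Nonempty V := ⟨i⟩
  obtain ⟨m, hm⟩ := Finite.exists_max fun l => |d l|
  have hdm : d m = 0 := by
    by_cases hmS : m ∈ S
    · exact hS m hmS
    · exact eq_zero_of_abs_isMax_of_harmonic_at (hw m) hm (hd m hmS)
  simpa [hdm] using hm i

end MaximumPrinciple

theorem sum_mul_sub_sub_mul {V : Type*} [Fintype V] (a x y h : V → ℝ) (c : ℝ) :
    ∑ l, a l * (x l - y l - h l * c) = ∑ l, a l * x l - ∑ l, a l * y l - (∑ l, a l * h l) * c := by
  simp only [mul_sub, ← mul_assoc, sum_sub_distrib, sum_mul]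

theorem campaign_marginal_change_identity_general
    {V : Type*} [Fintype V] [DecidableEq V] (w : V → V → ℝ)
    (hw : ∀ i j, 0 ≤ w i j)
    (s : V → ℝ) (T : Finset V) (j : V)
    (z z' h : V → ℝ)
    (hz : IsTEquilibrium w s T z)
    (hz' : IsTEquilibrium w s (insert j T) z')
    (hh : IsAbsorptionVector w T j h) :
    ∀ i : V, z' i - z i = h i * (1 - z j) := by
  obtain ⟨hzT, hzE⟩ := hz
  obtain ⟨hz'T, hz'E⟩ := hz'
  obtain ⟨hhj, hhT, hhE⟩ := hh
  have harmonic : IsHarmonicOff w (insert j T) fun i => z' i - z i - h i * (1 - z j) := by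
    intro i hi
    obtain ⟨hij, hiT⟩ : i ≠ j ∧ i ∉ T := by simpa using hi
    rw [sum_mul_sub_sub_mul]
    linear_combination hz'E i hi - hzE i hiT - (1 - z j) * hhE i hiT hij
  have boundary : ∀ i ∈ insert j T, z' i - z i - h i * (1 - z j) = 0 := by
    intro i hi
    rcases mem_insert.mp hi with rfl | hiT
    · rw [hz'T i hi, hhj]; ring
    · rw [hz'T i hi, hzT i hiT, hhT i hiT]; ring
  exact fun i => sub_eq_zero.mp (harmonic.eq_zero hw boundary i)

/-- marginal change identity z' i − z i = h i · (1 − z j). -/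
theorem campaign_marginal_change_identity
    {V : Type*} [Fintype V] [DecidableEq V] (w : V → V → ℝ)
    (hw : ∀ i j, 0 ≤ w i j) (hdiag : ∀ i, w i i = 0)
    (s : V → ℝ) (T : Finset V) (j : V) (hj : j ∉ T)
    (z z' h : V → ℝ)
    (hz : IsTEquilibrium w s T z)
    (hz' : IsTEquilibrium w s (insert j T) z')
    (hh : IsAbsorptionVector w T j h) :
    ∀ i : V, z' i - z i = h i * (1 - z j) :=
  campaign_marginal_change_identity_general w hw s T j z z' h hz hz' hh
end

section
/- (Marginal gain formula.) Let V be a finite set, w a weight function on V, s : V → ℝ, T ⊆ V and j ∈ V with j ∉ T. Let z be the T-equilibrium and z' the (T ∪ {j})-equilibrium for (w, s), and let h be the absorption vector for (T, j). Then g(z') − g(z) = (1 − z j) · Σ_{i ∈ V} h i, where g(z) = Σ_{i ∈ V} z i. -/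
/-!
Both equilibria and the absorption vector are described by the linear operator
`(A x) i = x i * (1 + W i) - Σ_l w i l * x l` together with boundary values on `T ∪ {j}`.
Hence `e = z' - z - (1 - z j) • h` vanishes on `T ∪ {j}` and satisfies `A e = 0` off it.
A maximum principle for `A` (at a maximiser of `|e|`, `|e i| (1 + W i) ≤ W i |e i|`)
forces `e = 0`, and summing `z' - z = (1 - z j) • h` gives the formula.
-/

section

open Finset

variable {V : Type*} [Fintype V]

def opinionOperator (w : V → V → ℝ) : (V → ℝ) →ₗ[ℝ] (V → ℝ) where
  toFun x i := x i * (1 + ∑ l, w i l) - ∑ l, w i l * x l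
  map_add' x y := by
    funext i
    simp only [Pi.add_apply, mul_add, sum_add_distrib]
    ring
  map_smul' c x := by
    funext i
    simp only [Pi.smul_apply, smul_eq_mul, RingHom.id_apply, mul_left_comm _ c, ← mul_sum]
    ring

theorem opinionOperator_apply (w : V → V → ℝ) (x : V → ℝ) (i : V) :
    opinionOperator w x i = x i * (1 + ∑ l, w i l) - ∑ l, w i l * x l :=
  rfl

theorem IsTEquilibrium.opinionOperator_apply_of_notMem {w : V → V → ℝ} {s : V → ℝ}
    {T : Finset V} {z : V → ℝ} (hz : IsTEquilibrium w s T z) {i : V} (hi : i ∉ T) :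
    opinionOperator w z i = s i := by
  rw [opinionOperator_apply, hz.2 i hi]
  ring

theorem IsAbsorptionVector.opinionOperator_apply_of_notMem {w : V → V → ℝ} {T : Finset V}
    {j : V} {h : V → ℝ} (hh : IsAbsorptionVector w T j h) {i : V} (hiT : i ∉ T)
    (hij : i ≠ j) : opinionOperator w h i = 0 := by
  rw [opinionOperator_apply, hh.2.2 i hiT hij, sub_self]

theorem abs_mul_one_add_sum_le_of_opinionOperator_eq_zero {w : V → V → ℝ}
    (hw : ∀ i j, 0 ≤ w i j) {e : V → ℝ} {M : ℝ} (hM : ∀ l, |e l| ≤ M) {i : V}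
    (hi : opinionOperator w e i = 0) :
    |e i| * (1 + ∑ l, w i l) ≤ (∑ l, w i l) * M := by
  have hW : 0 ≤ ∑ l, w i l := sum_nonneg fun l _ => hw i l
  rw [opinionOperator_apply, sub_eq_zero] at hi
  calc |e i| * (1 + ∑ l, w i l) = |∑ l, w i l * e l| := by
        rw [← hi, abs_mul, abs_of_nonneg (by linarith : (0 : ℝ) ≤ 1 + ∑ l, w i l)]
    _ ≤ ∑ l, |w i l * e l| := abs_sum_le_sum_abs _ _
    _ ≤ ∑ l, w i l * M := sum_le_sum fun l _ => by
        rw [abs_mul, abs_of_nonneg (hw i l)]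
        exact mul_le_mul_of_nonneg_left (hM l) (hw i l)
    _ = (∑ l, w i l) * M := (sum_mul _ _ _).symm

theorem eq_zero_of_opinionOperator_eq_zero_off {w : V → V → ℝ} (hw : ∀ i j, 0 ≤ w i j)
    {S : Set V} {e : V → ℝ} (hS : ∀ i ∈ S, e i = 0)
    (he : ∀ i ∉ S, opinionOperator w e i = 0) : e = 0 := by
  cases isEmpty_or_nonempty V
  · exact Subsingleton.elim _ _
  obtain ⟨i₀, -, hmax⟩ := exists_max_image univ (fun i => |e i|) univ_nonempty
  have hmax : ∀ l, |e l| ≤ |e i₀| := fun l => hmax l (mem_univ l)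
  have hi₀ : |e i₀| = 0 := by
    by_cases hi₀S : i₀ ∈ S
    · rw [hS i₀ hi₀S, abs_zero]
    · have := abs_mul_one_add_sum_le_of_opinionOperator_eq_zero hw hmax (he i₀ hi₀S)
      linarith [abs_nonneg (e i₀)]
  funext l
  exact abs_nonpos_iff.mp (hi₀ ▸ hmax l)
end

theorem campaign_marginal_gain_formula_general
    {V : Type*} [Fintype V] [DecidableEq V] (w : V → V → ℝ)
    (hw : ∀ i j, 0 ≤ w i j)
    (s : V → ℝ) (T : Finset V) (j : V)
    (z z' h : V → ℝ)
    (hz : IsTEquilibrium w s T z)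
    (hz' : IsTEquilibrium w s (insert j T) z')
    (hh : IsAbsorptionVector w T j h) :
    (∑ i, z' i) - (∑ i, z i) = (1 - z j) * ∑ i, h i := by
  set e := z' - z - (1 - z j) • h
  have he_boundary : ∀ i ∈ (insert j T : Set V), e i = 0 := by
    rintro i (rfl | hiT)
    · simp [e, hz'.1 i (Finset.mem_insert_self i T), hh.1]
    · simp [e, hz'.1 i (Finset.mem_insert_of_mem hiT), hz.1 i hiT, hh.2.1 i hiT]
  have he_interior : ∀ i ∉ (insert j T : Set V), opinionOperator w e i = 0 := by
    intro i hi
    simp only [Set.mem_insert_iff, Finset.mem_coe, not_or] at hi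
    simp [e, map_sub, map_smul, hz'.opinionOperator_apply_of_notMem
      fun hi' => (Finset.mem_insert.mp hi').elim hi.1 hi.2,
      hz.opinionOperator_apply_of_notMem hi.2, hh.opinionOperator_apply_of_notMem hi.2 hi.1]
  have he := eq_zero_of_opinionOperator_eq_zero_off hw he_boundary he_interior
  calc (∑ i, z' i) - (∑ i, z i) = ∑ i, (z' i - z i) := (Finset.sum_sub_distrib _ _).symm
    _ = ∑ i, (1 - z j) * h i := Finset.sum_congr rfl fun i _ => by
        have hi := congrFun he i
        simp only [e, Pi.sub_apply, Pi.smul_apply, smul_eq_mul, Pi.zero_apply] at hi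
        linarith
    _ = (1 - z j) * ∑ i, h i := (Finset.mul_sum _ _ _).symm

/-- marginal gain formula g(z') − g(z) = (1 − z j) · Σ_i h i. -/
theorem campaign_marginal_gain_formula
    {V : Type*} [Fintype V] [DecidableEq V] (w : V → V → ℝ)
    (hw : ∀ i j, 0 ≤ w i j) (hdiag : ∀ i, w i i = 0)
    (s : V → ℝ) (T : Finset V) (j : V) (hj : j ∉ T)
    (z z' h : V → ℝ)
    (hz : IsTEquilibrium w s T z)
    (hz' : IsTEquilibrium w s (insert j T) z')
    (hh : IsAbsorptionVector w T j h) :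
    (∑ i, z' i) - (∑ i, z i) = (1 - z j) * ∑ i, h i :=
  campaign_marginal_gain_formula_general w hw s T j z z' h hz hz' hh
end

section
/- (Monotonicity of absorption probabilities.) Let V be a finite set, w a weight function on V, T ⊆ T' ⊆ V, and j ∈ V with j ∉ T'. Let h be the absorption vector for (T, j) and h' the absorption vector for (T', j). Then 0 ≤ h' i ≤ h i ≤ 1 for every node i ∈ V. -/
/-!
Write `L g i = g i * (1 + W i) - ∑ l, w i l * g l` for the operator whose kernel off the
absorbing set defines absorption vectors. Because of the extra unit rate towards the sink,
`L g i = g i + ∑ l, w i l * (g i - g l)`, so at a global minimum of `g` we have `L g ≤ g`: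
a function with `L g ≥ 0` off a set `S` and `g ≥ 0` on `S` is nonnegative everywhere, with no
connectivity assumption. All three inequalities follow by applying this minimum principle to
`h'`, `1 - h` and `h - h'`, using that `L` is linear and `L 1 = 1`.
-/

open Finset

/-- The Laplacian of the augmented graph, including the unit-weight edge to the sink. -/
def killedLaplacian {V : Type*} [Fintype V] (w : V → V → ℝ) (g : V → ℝ) (i : V) : ℝ :=
  g i * (1 + ∑ l, w i l) - ∑ l, w i l * g l

section KilledLaplacian

variable {V : Type*} [Fintype V] (w : V → V → ℝ)

lemma killedLaplacian_eq_add_sum (g : V → ℝ) (i : V) :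
    killedLaplacian w g i = g i + ∑ l, w i l * (g i - g l) := by
  simp only [killedLaplacian, mul_sub, sum_sub_distrib, ← sum_mul]
  ring

lemma killedLaplacian_sub (f g : V → ℝ) :
    killedLaplacian w (f - g) = killedLaplacian w f - killedLaplacian w g := by
  ext i
  simp only [killedLaplacian, Pi.sub_apply, mul_sub, sum_sub_distrib]
  ring

lemma killedLaplacian_one : killedLaplacian w 1 = 1 := by
  ext i
  simp [killedLaplacian]

theorem nonneg_of_killedLaplacian_nonneg (hw : ∀ i j, 0 ≤ w i j) {S : Finset V} {g : V → ℝ}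
    (hS : ∀ s ∈ S, 0 ≤ g s) (hL : ∀ i ∉ S, 0 ≤ killedLaplacian w g i) (i : V) : 0 ≤ g i := by
  have : Nonempty V := ⟨i⟩
  obtain ⟨m, hm⟩ := Finite.exists_min g
  suffices 0 ≤ g m from this.trans (hm i)
  by_cases hmS : m ∈ S
  · exact hS m hmS
  · have hsum : ∑ l, w m l * (g m - g l) ≤ 0 :=
      sum_nonpos fun l _ => mul_nonpos_of_nonneg_of_nonpos (hw m l) (sub_nonpos.2 (hm l))
    have := hL m hmS
    rw [killedLaplacian_eq_add_sum] at this
    linarith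

end KilledLaplacian

namespace IsAbsorptionVector

variable {V : Type*} [Fintype V] [DecidableEq V] {w : V → V → ℝ} {T : Finset V} {j : V} {h : V → ℝ}

lemma killedLaplacian_eq_zero (hh : IsAbsorptionVector w T j h) {i : V} (hi : i ∉ insert j T) :
    killedLaplacian w h i = 0 := by
  rw [mem_insert, not_or] at hi
  rw [killedLaplacian, hh.2.2 i hi.2 hi.1, sub_self]

lemma nonneg (hw : ∀ i j, 0 ≤ w i j) (hh : IsAbsorptionVector w T j h) (i : V) : 0 ≤ h i := by
  refine nonneg_of_killedLaplacian_nonneg w hw (S := insert j T) ?_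
    (fun i hi => (hh.killedLaplacian_eq_zero hi).ge) i
  rw [forall_mem_insert, hh.1]
  exact ⟨zero_le_one, fun t ht => (hh.2.1 t ht).ge⟩

lemma le_one (hw : ∀ i j, 0 ≤ w i j) (hh : IsAbsorptionVector w T j h) (i : V) : h i ≤ 1 := by
  have hL : ∀ i ∉ insert j T, 0 ≤ killedLaplacian w (1 - h) i := fun i hi => by
    simp [killedLaplacian_sub, killedLaplacian_one, hh.killedLaplacian_eq_zero hi]
  have hS : ∀ s ∈ insert j T, 0 ≤ (1 - h) s := by
    rw [forall_mem_insert]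
    exact ⟨by simp [hh.1], fun t ht => by simp [hh.2.1 t ht]⟩
  simpa using nonneg_of_killedLaplacian_nonneg w hw hS hL i

lemma le_of_subset (hw : ∀ i j, 0 ≤ w i j) {T' : Finset V} {h' : V → ℝ} (hTT' : T ⊆ T')
    (hh : IsAbsorptionVector w T j h) (hh' : IsAbsorptionVector w T' j h') (i : V) :
    h' i ≤ h i := by
  have hL : ∀ i ∉ insert j T', 0 ≤ killedLaplacian w (h - h') i := fun i hi => by
    have hiT : i ∉ insert j T := fun hmem => hi (insert_subset_insert j hTT' hmem)
    simp [killedLaplacian_sub, hh.killedLaplacian_eq_zero hiT, hh'.killedLaplacian_eq_zero hi]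
  have hS : ∀ s ∈ insert j T', 0 ≤ (h - h') s := by
    rw [forall_mem_insert]
    exact ⟨by simp [hh.1, hh'.1], fun t ht => by simpa [hh'.2.1 t ht] using hh.nonneg hw t⟩
  simpa using nonneg_of_killedLaplacian_nonneg w hw hS hL i

end IsAbsorptionVector

theorem campaign_absorption_monotone_general
    {V : Type*} [Fintype V] (w : V → V → ℝ)
    (hw : ∀ i j, 0 ≤ w i j)
    (T T' : Finset V) (hTT' : T ⊆ T') (j : V)
    (h h' : V → ℝ)
    (hh : IsAbsorptionVector w T j h)
    (hh' : IsAbsorptionVector w T' j h') :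
    ∀ i : V, 0 ≤ h' i ∧ h' i ≤ h i ∧ h i ≤ 1 := by
  classical
  exact fun i => ⟨hh'.nonneg hw i, hh.le_of_subset hw hTT' hh' i, hh.le_one hw i⟩

/-- monotonicity of absorption probabilities:
0 ≤ h' i ≤ h i ≤ 1 when T ⊆ T'. -/
theorem campaign_absorption_monotone
    {V : Type*} [Fintype V] (w : V → V → ℝ)
    (hw : ∀ i j, 0 ≤ w i j) (hdiag : ∀ i, w i i = 0)
    (T T' : Finset V) (hTT' : T ⊆ T') (j : V) (hj : j ∉ T')
    (h h' : V → ℝ)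
    (hh : IsAbsorptionVector w T j h)
    (hh' : IsAbsorptionVector w T' j h') :
    ∀ i : V, 0 ≤ h' i ∧ h' i ≤ h i ∧ h i ≤ 1 :=
  campaign_absorption_monotone_general w hw T T' hTT' j h h' hh hh'
end

section
/- (Independence of the overall opinion from the network structure.) Let V be a finite set, s : V → ℝ, and let w and w' be two symmetric weight functions on V. If z is the unconstrained equilibrium for (w, s) and z' is the unconstrained equilibrium for (w', s), then Σ_{i ∈ V} z i = Σ_{i ∈ V} z' i. In particular, adding or removing edges in an undirected social graph does not change the overall opinion g(z). -/
open Finset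

def IsEquilibrium {V R : Type*} [Fintype V] [CommRing R] (w : V → V → R) (s z : V → R) : Prop :=
  ∀ i, z i * (1 + ∑ j, w i j) = s i + ∑ j, w i j * z j

/-- Summing the equilibrium equations, symmetry makes the influence terms `∑ i, z i * W i` and
`∑ i, ∑ j, w i j * z j` coincide. -/
theorem IsEquilibrium.sum_eq_sum {V R : Type*} [Fintype V] [CommRing R] {w : V → V → R}
    {s z : V → R} (hz : IsEquilibrium w s z) (hsymm : ∀ i j, w i j = w j i) :
    ∑ i, z i = ∑ i, s i := by
  have hflow : ∑ i, z i * ∑ j, w i j = ∑ i, ∑ j, w i j * z j := by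
    simp only [mul_sum]
    rw [sum_comm]
    exact sum_congr rfl fun i _ => sum_congr rfl fun j _ => by rw [hsymm j i, mul_comm]
  have htotal := sum_congr rfl fun i (_ : i ∈ univ) => hz i
  simp only [mul_add, mul_one, sum_add_distrib] at htotal
  rw [hflow] at htotal
  exact add_right_cancel htotal

theorem campaign_overall_opinion_network_independent_general
    {V : Type*} [Fintype V] (w w' : V → V → ℝ)
    (hsymm : ∀ i j, w i j = w j i)
    (hsymm' : ∀ i j, w' i j = w' j i)
    (s : V → ℝ) (z z' : V → ℝ)
    (heq : ∀ i, z i * (1 + ∑ j, w i j) = s i + ∑ j, w i j * z j)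
    (heq' : ∀ i, z' i * (1 + ∑ j, w' i j) = s i + ∑ j, w' i j * z' j) :
    ∑ i, z i = ∑ i, z' i := by
  rw [IsEquilibrium.sum_eq_sum heq hsymm, IsEquilibrium.sum_eq_sum heq' hsymm']

/-- the overall opinion at the unconstrained equilibrium is
independent of the (undirected) network structure. -/
theorem campaign_overall_opinion_network_independent
    {V : Type*} [Fintype V] (w w' : V → V → ℝ)
    (hsymm : ∀ i j, w i j = w j i) (hw : ∀ i j, 0 ≤ w i j) (hdiag : ∀ i, w i i = 0)
    (hsymm' : ∀ i j, w' i j = w' j i) (hw' : ∀ i j, 0 ≤ w' i j) (hdiag' : ∀ i, w' i i = 0)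
    (s : V → ℝ) (z z' : V → ℝ)
    (heq : ∀ i, z i * (1 + ∑ j, w i j) = s i + ∑ j, w i j * z j)
    (heq' : ∀ i, z' i * (1 + ∑ j, w' i j) = s i + ∑ j, w' i j * z' j) :
    ∑ i, z i = ∑ i, z' i :=
  campaign_overall_opinion_network_independent_general w w' hsymm hsymm' s z z' heq heq'
end

section
/- (Optimal solution of the i-Campaign problem.) Let V be a finite set, s : V → ℝ, and let k ≤ |V|. Let S₀ ⊆ V with |S₀| = k be such that s i ≤ s j for every i ∈ S₀ and j ∉ S₀ (S₀ consists of k nodes with the smallest internal opinions). Then for every S ⊆ V with |S| = k, Σ_{i ∈ V} (if i ∈ S then 1 else s i) ≤ Σ_{i ∈ V} (if i ∈ S₀ then 1 else s i). That is, setting the k smallest internal opinions to 1 maximizes the sum of internal opinions, and hence (by the opinion-sum invariant) the overall opinion g(z). -/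
/-!
Writing `∑ i, (if i ∈ S then 1 else s i) = ∑ i, s i + ∑ i ∈ S, (1 - s i)`, the objective for
`#S = k` is `∑ i, s i + k - ∑ i ∈ S, s i`, so it is maximal exactly when `∑ i ∈ S, s i` is minimal.
Comparing `S₀` with any `S` of the same size, the common part cancels and the remaining parts
`S₀ \ S` and `S \ S₀` have equal size, with every value on the first below every value on the second.
-/

open Finset

namespace Finset

variable {ι M : Type*} [AddCommMonoid M] [LinearOrder M] [IsOrderedAddMonoid M]

theorem sum_le_sum_of_card_eq_of_forall_le {A B : Finset ι} (f : ι → M) (hcard : #A = #B)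
    (h : ∀ a ∈ A, ∀ b ∈ B, f a ≤ f b) : ∑ i ∈ A, f i ≤ ∑ i ∈ B, f i := by
  rcases A.eq_empty_or_nonempty with rfl | hA
  · rw [card_empty, eq_comm, card_eq_zero] at hcard
    simp [hcard]
  calc ∑ i ∈ A, f i ≤ #A • A.sup' hA f := sum_le_card_nsmul A f _ fun a ha => le_sup' f ha
    _ = #B • A.sup' hA f := by rw [hcard]
    _ ≤ ∑ i ∈ B, f i :=
        card_nsmul_le_sum B f _ fun b hb => sup'_le hA f fun a ha => h a ha b hb

theorem sum_le_sum_of_card_eq_of_forall_le_compl [DecidableEq ι] {S₀ S : Finset ι} (f : ι → M)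
    (hcard : #S₀ = #S) (hmin : ∀ i ∈ S₀, ∀ j ∉ S₀, f i ≤ f j) :
    ∑ i ∈ S₀, f i ≤ ∑ i ∈ S, f i := by
  have hsdiff : ∑ i ∈ S₀ \ S, f i ≤ ∑ i ∈ S \ S₀, f i :=
    sum_le_sum_of_card_eq_of_forall_le f (card_sdiff_comm hcard) fun a ha b hb =>
      hmin a (mem_sdiff.1 ha).1 b (mem_sdiff.1 hb).2
  rw [← sum_inter_add_sum_sdiff S₀ S, ← sum_inter_add_sum_sdiff S S₀, inter_comm]
  exact add_le_add_right hsdiff _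

end Finset

theorem Finset.sum_ite_mem_eq_sum_add_sum_sub {ι G : Type*} [Fintype ι] [DecidableEq ι]
    [AddCommGroup G] (T : Finset ι) (c : G) (f : ι → G) :
    ∑ i, (if i ∈ T then c else f i) = ∑ i, f i + ∑ i ∈ T, (c - f i) := by
  rw [← sum_add_sum_compl T f, ← sum_add_sum_compl T, sum_sub_distrib,
    sum_congr rfl fun i hi => if_pos hi, sum_congr rfl fun i hi => if_neg (mem_compl.1 hi)]
  abel

theorem iCampaign_optimal_min_s_general
    {V : Type*} [Fintype V] [DecidableEq V] (s : V → ℝ) (k : ℕ)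
    (S₀ : Finset V) (hcard₀ : S₀.card = k)
    (hmin : ∀ i ∈ S₀, ∀ j ∉ S₀, s i ≤ s j) :
    ∀ S : Finset V, S.card = k →
      (∑ i, if i ∈ S then (1 : ℝ) else s i) ≤ ∑ i, if i ∈ S₀ then (1 : ℝ) else s i := by
  intro S hS
  have hsum : ∑ i ∈ S₀, s i ≤ ∑ i ∈ S, s i :=
    sum_le_sum_of_card_eq_of_forall_le_compl s (hcard₀.trans hS.symm) hmin
  simp only [sum_ite_mem_eq_sum_add_sum_sub, sum_sub_distrib, sum_const, hS, hcard₀]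
  linarith

/-- in the i-Campaign problem, setting the k smallest internal
opinions to 1 maximizes the sum of internal opinions. -/
theorem iCampaign_optimal_min_s
    {V : Type*} [Fintype V] [DecidableEq V] (s : V → ℝ) (k : ℕ)
    (hk : k ≤ Fintype.card V)
    (S₀ : Finset V) (hcard₀ : S₀.card = k)
    (hmin : ∀ i ∈ S₀, ∀ j ∉ S₀, s i ≤ s j) :
    ∀ S : Finset V, S.card = k →
      (∑ i, if i ∈ S then (1 : ℝ) else s i) ≤ ∑ i, if i ∈ S₀ then (1 : ℝ) else s i :=
  iCampaign_optimal_min_s_general s k S₀ hcard₀ hmin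
end

section
/- (Vertex-cover reduction, forward direction.) Let V be a finite set and w a symmetric weight function on V taking values in {0, 1} with w i i = 0, such that the associated graph is d-regular for some d ≥ 1 (that is, W i = d for every i ∈ V). Let s i = 0 for all i, let T ⊆ V, and let z be the T-equilibrium for (w, s). If T is a vertex cover (for every i, j with w i j = 1, i ∈ T or j ∈ T), then z j = d / (d + 1) for every j ∉ T, and hence Σ_{i ∈ V} z i = |T| + (|V| − |T|) · d / (d + 1). -/
/-!
Since `T` is a vertex cover, every neighbour of a node `i ∉ T` lies in `T` and so holds opinion
`1`; the equilibrium equation at `i` then reads `z i * (1 + d) = d`.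
-/

open Finset

section

variable {V R : Type*} [Fintype V]

theorem sum_mul_eq_sum_of_forall_ne_zero_eq_one [Semiring R] {w z : V → R}
    (h : ∀ j, w j ≠ 0 → z j = 1) : ∑ j, w j * z j = ∑ j, w j :=
  sum_congr rfl fun j _ => by
    by_cases hw : w j = 0
    · simp [hw]
    · rw [h j hw, mul_one]

theorem eq_div_of_equilibrium_of_forall_neighbor_eq_one [Field R] {w z : V → R} {s zi : R}
    (heq : zi * (1 + ∑ j, w j) = s + ∑ j, w j * z j) (hnbr : ∀ j, w j ≠ 0 → z j = 1)
    (hW : 1 + ∑ j, w j ≠ 0) : zi = (s + ∑ j, w j) / (1 + ∑ j, w j) := by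
  rw [sum_mul_eq_sum_of_forall_ne_zero_eq_one hnbr] at heq
  rw [eq_div_iff hW, heq]

theorem sum_eq_of_forall_mem_of_forall_not_mem [CommRing R] (T : Finset V) {z : V → R}
    {a b : R} (ha : ∀ i ∈ T, z i = a) (hb : ∀ i ∉ T, z i = b) :
    ∑ i, z i = T.card * a + ((Fintype.card V : R) - T.card) * b := by
  classical
  rw [← sum_add_sum_compl T, sum_congr rfl ha,
    sum_congr rfl fun i hi => hb i (mem_compl.mp hi), sum_const, sum_const, card_compl,
    nsmul_eq_mul, nsmul_eq_mul, Nat.cast_sub (card_le_univ T)]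

end

theorem campaign_vertex_cover_forward_general
    {V : Type*} [Fintype V] (w : V → V → ℝ)
    (hval : ∀ i j, w i j = 0 ∨ w i j = 1)
    (d : ℕ) (hreg : ∀ i, ∑ j, w i j = (d : ℝ))
    (s : V → ℝ) (hs : ∀ i, s i = 0)
    (T : Finset V) (z : V → ℝ)
    (hz1 : ∀ i ∈ T, z i = 1)
    (hz2 : ∀ i ∉ T, z i * (1 + ∑ j, w i j) = s i + ∑ j, w i j * z j)
    (hvc : ∀ i j, w i j = 1 → i ∈ T ∨ j ∈ T) :
    (∀ j ∉ T, z j = (d : ℝ) / (d + 1)) ∧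
    ∑ i, z i = (T.card : ℝ) + ((Fintype.card V : ℝ) - T.card) * ((d : ℝ) / (d + 1)) := by
  have hcompl : ∀ i ∉ T, z i = (d : ℝ) / (d + 1) := by
    intro i hi
    have hnbr : ∀ j, w i j ≠ 0 → z j = 1 := fun j hj =>
      hz1 j ((hvc i j ((hval i j).resolve_left hj)).resolve_left hi)
    have h := eq_div_of_equilibrium_of_forall_neighbor_eq_one (hz2 i hi) hnbr
      (by rw [hreg]; positivity)
    rwa [hs, hreg, zero_add, add_comm 1] at h
  refine ⟨hcompl, ?_⟩
  rw [sum_eq_of_forall_mem_of_forall_not_mem T hz1 hcompl, mul_one]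

/-- vertex-cover reduction, forward direction. -/
theorem campaign_vertex_cover_forward
    {V : Type*} [Fintype V] [DecidableEq V] (w : V → V → ℝ)
    (hsymm : ∀ i j, w i j = w j i) (hdiag : ∀ i, w i i = 0)
    (hval : ∀ i j, w i j = 0 ∨ w i j = 1)
    (d : ℕ) (hd : 1 ≤ d) (hreg : ∀ i, ∑ j, w i j = (d : ℝ))
    (s : V → ℝ) (hs : ∀ i, s i = 0)
    (T : Finset V) (z : V → ℝ)
    (hz1 : ∀ i ∈ T, z i = 1)
    (hz2 : ∀ i ∉ T, z i * (1 + ∑ j, w i j) = s i + ∑ j, w i j * z j)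
    (hvc : ∀ i j, w i j = 1 → i ∈ T ∨ j ∈ T) :
    (∀ j ∉ T, z j = (d : ℝ) / (d + 1)) ∧
    ∑ i, z i = (T.card : ℝ) + ((Fintype.card V : ℝ) - T.card) * ((d : ℝ) / (d + 1)) :=
  campaign_vertex_cover_forward_general w hval d hreg s hs T z hz1 hz2 hvc
end

section
/- (Contraction property of the averaging update.) Let V be a nonempty finite set, w a weight function on V, s : V → ℝ, and T ⊆ V. Define the update map F : (V → ℝ) → (V → ℝ) by F(z) i = 1 if i ∈ T, and F(z) i = (s i + Σ_{j ∈ V} w i j · z j) / (1 + W i) if i ∉ T. Then for all z, z' : V → ℝ, max_{i ∈ V} |F(z) i − F(z') i| ≤ c · max_{i ∈ V} |z i − z' i|, where c = max_{i ∈ V} W i / (1 + W i) < 1. -/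
/-! At a node outside `T` the update puts weight `1 / (1 + W i)` on the internal opinion `s i`,
which does not depend on `z`, so a perturbation of the neighbours' opinions is damped by the
factor `W i / (1 + W i) < 1`; nodes in `T` do not move at all. -/

/-- The averaging update map: target nodes are fixed to 1, every other node
takes a weighted average of its internal opinion and its neighbors' opinions. -/
noncomputable def updateF {V : Type*} [Fintype V] [DecidableEq V]
    (w : V → V → ℝ) (s : V → ℝ) (T : Finset V) (z : V → ℝ) : V → ℝ :=
  fun i => if i ∈ T then 1 else (s i + ∑ j, w i j * z j) / (1 + ∑ j, w i j)

lemma div_one_add_self_lt_one {a : ℝ} (ha : 0 ≤ a) : a / (1 + a) < 1 :=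
  (div_lt_one (by linarith)).2 (by linarith)

lemma abs_sum_mul_sub_le {ι : Type*} (t : Finset ι) {w z z' : ι → ℝ} {M : ℝ}
    (hw : ∀ j, 0 ≤ w j) (hM : ∀ j, |z j - z' j| ≤ M) :
    |∑ j ∈ t, w j * z j - ∑ j ∈ t, w j * z' j| ≤ (∑ j ∈ t, w j) * M :=
  calc |∑ j ∈ t, w j * z j - ∑ j ∈ t, w j * z' j|
      = |∑ j ∈ t, w j * (z j - z' j)| := by simp only [mul_sub, Finset.sum_sub_distrib]
    _ ≤ ∑ j ∈ t, |w j * (z j - z' j)| := Finset.abs_sum_le_sum_abs _ _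
    _ ≤ ∑ j ∈ t, w j * M := Finset.sum_le_sum fun j _ => by
        rw [abs_mul, abs_of_nonneg (hw j)]
        exact mul_le_mul_of_nonneg_left (hM j) (hw j)
    _ = (∑ j ∈ t, w j) * M := (Finset.sum_mul _ _ _).symm

lemma abs_weightedAverage_sub_le {ι : Type*} [Fintype ι] {w z z' : ι → ℝ} {M : ℝ} (a : ℝ)
    (hw : ∀ j, 0 ≤ w j) (hM : ∀ j, |z j - z' j| ≤ M) :
    |(a + ∑ j, w j * z j) / (1 + ∑ j, w j) - (a + ∑ j, w j * z' j) / (1 + ∑ j, w j)| ≤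
      (∑ j, w j) / (1 + ∑ j, w j) * M := by
  have hpos : 0 < 1 + ∑ j, w j := by
    linarith [Finset.sum_nonneg fun j (_ : j ∈ Finset.univ) => hw j]
  rw [div_sub_div_same, add_sub_add_left_eq_sub, abs_div, abs_of_pos hpos, div_mul_eq_mul_div]
  exact div_le_div_of_nonneg_right (abs_sum_mul_sub_le _ hw hM) hpos.le

lemma abs_updateF_sub_le {V : Type*} [Fintype V] [DecidableEq V] {w : V → V → ℝ}
    (hw : ∀ i j, 0 ≤ w i j) (s : V → ℝ) (T : Finset V) {z z' : V → ℝ} {M : ℝ}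
    (hM : ∀ j, |z j - z' j| ≤ M) (i : V) :
    |updateF w s T z i - updateF w s T z' i| ≤ (∑ j, w i j) / (1 + ∑ j, w i j) * M := by
  by_cases hi : i ∈ T
  · simp only [updateF, if_pos hi, sub_self, abs_zero]
    have hW : 0 ≤ ∑ j, w i j := Finset.sum_nonneg fun j _ => hw i j
    exact mul_nonneg (div_nonneg hW (by linarith)) ((abs_nonneg _).trans (hM i))
  · simp only [updateF, if_neg hi]
    exact abs_weightedAverage_sub_le (s i) (hw i) hM

theorem campaign_update_contraction_general
    {V : Type*} [Fintype V] [DecidableEq V] [Nonempty V] (w : V → V → ℝ)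
    (hw : ∀ i j, 0 ≤ w i j)
    (s : V → ℝ) (T : Finset V) :
    (Finset.univ.sup' Finset.univ_nonempty
        (fun i => (∑ j, w i j) / (1 + ∑ j, w i j))) < 1 ∧
    ∀ z z' : V → ℝ,
      Finset.univ.sup' Finset.univ_nonempty
          (fun i => |updateF w s T z i - updateF w s T z' i|) ≤
        (Finset.univ.sup' Finset.univ_nonempty
            (fun i => (∑ j, w i j) / (1 + ∑ j, w i j))) *
          Finset.univ.sup' Finset.univ_nonempty (fun i => |z i - z' i|) := by
  have hW : ∀ i, 0 ≤ ∑ j, w i j := fun i => Finset.sum_nonneg fun j _ => hw i j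
  refine ⟨(Finset.sup'_lt_iff _).2 fun i _ => div_one_add_self_lt_one (hW i), fun z z' => ?_⟩
  set M := Finset.univ.sup' Finset.univ_nonempty (fun i => |z i - z' i|)
  have hM : ∀ j, |z j - z' j| ≤ M := fun j =>
    Finset.le_sup' (fun i => |z i - z' i|) (Finset.mem_univ j)
  refine Finset.sup'_le _ _ fun i _ => (abs_updateF_sub_le hw s T hM i).trans ?_
  exact mul_le_mul_of_nonneg_right
    (Finset.le_sup' (fun i => (∑ j, w i j) / (1 + ∑ j, w i j)) (Finset.mem_univ i))
    ((abs_nonneg _).trans (hM i))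

/-- the averaging update is a contraction in the sup norm with
contraction factor c = max_i W i / (1 + W i) < 1. -/
theorem campaign_update_contraction
    {V : Type*} [Fintype V] [DecidableEq V] [Nonempty V] (w : V → V → ℝ)
    (hw : ∀ i j, 0 ≤ w i j) (hdiag : ∀ i, w i i = 0)
    (s : V → ℝ) (T : Finset V) :
    (Finset.univ.sup' Finset.univ_nonempty
        (fun i => (∑ j, w i j) / (1 + ∑ j, w i j))) < 1 ∧
    ∀ z z' : V → ℝ,
      Finset.univ.sup' Finset.univ_nonempty
          (fun i => |updateF w s T z i - updateF w s T z' i|) ≤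
        (Finset.univ.sup' Finset.univ_nonempty
            (fun i => (∑ j, w i j) / (1 + ∑ j, w i j))) *
          Finset.univ.sup' Finset.univ_nonempty (fun i => |z i - z' i|) :=
  campaign_update_contraction_general w hw s T
end

section
/- (Convergence of the power iteration to the equilibrium.) Let V be a nonempty finite set, w a weight function on V, s : V → ℝ, and T ⊆ V. Define the update map F : (V → ℝ) → (V → ℝ) by F(z) i = 1 if i ∈ T, and F(z) i = (s i + Σ_{j ∈ V} w i j · z j) / (1 + W i) if i ∉ T. Then for every initial vector z⁰ : V → ℝ, the iterates Fⁿ(z⁰) converge as n → ∞ to the unique T-equilibrium z* for (w, s), i.e., for every i ∈ V, Fⁿ(z⁰) i → z* i. -/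
open Finset

theorem abs_sum_mul_sub_sum_mul_le {ι : Type*} [Fintype ι] {w : ι → ℝ} (hw : ∀ j, 0 ≤ w j)
    (x y : ι → ℝ) : |∑ j, w j * x j - ∑ j, w j * y j| ≤ (∑ j, w j) * dist x y := by
  rw [← sum_sub_distrib, sum_mul]
  refine (abs_sum_le_sum_abs _ _).trans (sum_le_sum fun j _ => ?_)
  rw [← mul_sub, abs_mul, abs_of_nonneg (hw j), ← Real.dist_eq]
  exact mul_le_mul_of_nonneg_left (dist_le_pi_dist x y j) (hw j)

section UpdateMap

variable {V : Type*} [Fintype V] [DecidableEq V] {w : V → V → ℝ} {s : V → ℝ} {T : Finset V}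

theorem dist_updateF_apply_le (hw : ∀ i j, 0 ≤ w i j) (x y : V → ℝ) (i : V) :
    dist (updateF w s T x i) (updateF w s T y i)
      ≤ (∑ j, w i j) / (1 + ∑ j, w i j) * dist x y := by
  have hW : 0 ≤ ∑ j, w i j := sum_nonneg fun j _ => hw i j
  by_cases hi : i ∈ T
  · simp only [updateF, hi, if_true, dist_self]
    positivity
  · simp only [updateF, hi, if_false, Real.dist_eq]
    rw [div_sub_div_same, add_sub_add_left_eq_sub, abs_div,
      abs_of_pos (show 0 < 1 + ∑ j, w i j by linarith), div_mul_eq_mul_div]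
    exact div_le_div_of_nonneg_right (abs_sum_mul_sub_sum_mul_le (hw i) x y) (by linarith)

theorem contractingWith_updateF (hw : ∀ i j, 0 ≤ w i j) {M : ℝ} (hM₀ : 0 ≤ M)
    (hM : ∀ i, ∑ j, w i j ≤ M) : ContractingWith (M / (1 + M)).toNNReal (updateF w s T) := by
  refine ⟨Real.toNNReal_lt_one.2 ((div_lt_one (by linarith)).2 (by linarith)), ?_⟩
  refine LipschitzWith.of_dist_le_mul fun x y => (dist_pi_le_iff (by positivity)).2 fun i => ?_
  have hW : 0 ≤ ∑ j, w i j := sum_nonneg fun j _ => hw i j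
  have hK : (∑ j, w i j) / (1 + ∑ j, w i j) ≤ M / (1 + M) := by
    rw [div_le_div_iff₀ (by linarith) (by linarith)]
    linarith [hM i]
  rw [Real.coe_toNNReal _ (by positivity)]
  exact (dist_updateF_apply_le hw x y i).trans (mul_le_mul_of_nonneg_right hK dist_nonneg)

theorem isFixedPt_updateF_iff (hw : ∀ i j, 0 ≤ w i j) {z : V → ℝ} :
    Function.IsFixedPt (updateF w s T) z ↔ IsTEquilibrium w s T z := by
  have hpos i : 0 < 1 + ∑ j, w i j := by linarith [sum_nonneg fun j (_ : j ∈ univ) => hw i j]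
  simp only [Function.IsFixedPt, funext_iff, IsTEquilibrium, updateF]
  constructor
  · intro h
    refine ⟨fun i hi => by simpa [hi] using (h i).symm, fun i hi => ?_⟩
    have hi' := h i
    rw [if_neg hi, div_eq_iff (hpos i).ne'] at hi'
    linarith
  · rintro ⟨hT, hTc⟩ i
    by_cases hi : i ∈ T
    · simp [hi, hT i hi]
    · rw [if_neg hi, div_eq_iff (hpos i).ne']
      linarith [hTc i hi]

end UpdateMap

theorem campaign_power_iteration_converges_general
    {V : Type*} [Fintype V] [DecidableEq V] (w : V → V → ℝ)
    (hw : ∀ i j, 0 ≤ w i j)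
    (s : V → ℝ) (T : Finset V) :
    ∃ zstar : V → ℝ,
      IsTEquilibrium w s T zstar ∧
      (∀ z : V → ℝ, IsTEquilibrium w s T z → z = zstar) ∧
      ∀ z0 : V → ℝ, ∀ i : V,
        Filter.Tendsto (fun n => (updateF w s T)^[n] z0 i)
          Filter.atTop (nhds (zstar i)) := by
  have hc : ContractingWith _ (updateF w s T) :=
    contractingWith_updateF hw (M := ∑ i, ∑ j, w i j)
      (sum_nonneg fun i _ => sum_nonneg fun j _ => hw i j)
      (fun i => single_le_sum (fun i _ => sum_nonneg fun j _ => hw i j) (mem_univ i))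
  refine ⟨hc.fixedPoint, (isFixedPt_updateF_iff hw).1 hc.fixedPoint_isFixedPt,
    fun z hz => hc.fixedPoint_unique ((isFixedPt_updateF_iff hw).2 hz), fun z0 => ?_⟩
  exact tendsto_pi_nhds.1 (hc.tendsto_iterate_fixedPoint z0)

/-- the power iteration converges to the unique T-equilibrium
from any initial vector. -/
theorem campaign_power_iteration_converges
    {V : Type*} [Fintype V] [DecidableEq V] [Nonempty V] (w : V → V → ℝ)
    (hw : ∀ i j, 0 ≤ w i j) (hdiag : ∀ i, w i i = 0)
    (s : V → ℝ) (T : Finset V) :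
    ∃ zstar : V → ℝ,
      IsTEquilibrium w s T zstar ∧
      (∀ z : V → ℝ, IsTEquilibrium w s T z → z = zstar) ∧
      ∀ z0 : V → ℝ, ∀ i : V,
        Filter.Tendsto (fun n => (updateF w s T)^[n] z0 i)
          Filter.atTop (nhds (zstar i)) :=
  campaign_power_iteration_converges_general w hw s T
end
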